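/- arXiv:2507.06731 — 2 statements merged into one kernel-verified Lean document; each statement's English description precedes it below -/
import Mathlib

section
/- Let H be a real Hilbert space, V ⊆ H a closed subspace with orthogonal projection Π_V, and λ : H →L[ℝ] ℝ a continuous linear functional with Riesz representer v_λ. Then the generalized power function of λ equals the distance of the Riesz representer to the subspace: P_V(λ) = ‖v_λ − Π_V(v_λ)‖ = dist(v_λ, V), where P_V(λ) is the supremum of |λ(u − Π_V(u))| over all u in the closed unit ball of H. -/
open scoped InnerProductSpace

/-!
Since `Π_V` is self-adjoint, `u ↦ λ (u - Π_V u)` is the functional `λ ∘ Π_{V^⊥}`, whose Riesz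
representer is `Π_{V^⊥} v_λ = v_λ - Π_V v_λ`. The supremum over the unit ball is the operator norm
of this functional, i.e. the norm of its representer, and the projection residual realizes the
distance to `V` because `Π_V v_λ` is the best approximation of `v_λ` in `V`.
-/

open Metric in
theorem ContinuousLinearMap.iSup_norm_le_one_norm_apply_eq_norm {𝕜 𝕜₂ E F : Type*}
    [DenselyNormedField 𝕜] [NontriviallyNormedField 𝕜₂] {σ₁₂ : 𝕜 →+* 𝕜₂} [RingHomIsometric σ₁₂]
    [NormedAddCommGroup E] [NormedSpace 𝕜 E] [SeminormedAddCommGroup F] [NormedSpace 𝕜₂ F]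
    (f : E →SL[σ₁₂] F) : ⨆ u : {u : E // ‖u‖ ≤ 1}, ‖f u‖ = ‖f‖ := by
  rw [← f.sSup_unitClosedBall_eq_norm, Set.image_eq_range]
  exact (Equiv.subtypeEquivRight fun _ => mem_closedBall_zero_iff.symm).iSup_congr
    (g := fun u : closedBall (0 : E) 1 => ‖f u‖) fun _ => rfl

namespace Submodule

variable {𝕜 E : Type*} [RCLike 𝕜] [NormedAddCommGroup E] [InnerProductSpace 𝕜 E]
  (K : Submodule 𝕜 E) [K.HasOrthogonalProjection]

theorem norm_sub_starProjection_eq_infDist (y : E) :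
    ‖y - K.starProjection y‖ = Metric.infDist y K := by
  rw [starProjection_minimal, Metric.infDist_eq_iInf]
  simp_rw [dist_eq_norm]
  rfl

variable [CompleteSpace E]

theorem comp_starProjection_eq_toDual (l : E →L[𝕜] 𝕜) :
    l.comp K.starProjection =
      InnerProductSpace.toDual 𝕜 E (K.starProjection ((InnerProductSpace.toDual 𝕜 E).symm l)) := by
  ext u
  simp [inner_starProjection_left_eq_right]

theorem norm_comp_starProjection (l : E →L[𝕜] 𝕜) :
    ‖l.comp K.starProjection‖ = ‖K.starProjection ((InnerProductSpace.toDual 𝕜 E).symm l)‖ := by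
  rw [comp_starProjection_eq_toDual, LinearIsometryEquiv.norm_map]

end Submodule

/-- The generalized power function of a functional `λ`, defined as the
supremum of `|λ (u - Π_V u)|` over the closed unit ball, equals the norm of the
projection residual of its Riesz representer, which in turn equals the distance of the
Riesz representer to the subspace. -/
theorem power_function_eq_dist_riesz_representer
    {H : Type*} [NormedAddCommGroup H] [InnerProductSpace ℝ H] [CompleteSpace H]
    (V : Submodule ℝ H) [V.HasOrthogonalProjection]
    (l : H →L[ℝ] ℝ) (vl : H) (hvl : vl = (InnerProductSpace.toDual ℝ H).symm l) :
    (⨆ u : {u : H // ‖u‖ ≤ 1}, |l ((u : H) - (V.orthogonalProjectionOnto (u : H) : H))|)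
        = ‖vl - (V.orthogonalProjectionOnto vl : H)‖ ∧
      ‖vl - (V.orthogonalProjectionOnto vl : H)‖ = Metric.infDist vl (V : Set H) := by
  simp only [← V.starProjection_apply]
  refine ⟨?_, V.norm_sub_starProjection_eq_infDist vl⟩
  simp only [← V.starProjection_orthogonal_val]
  rw [hvl, ← Vᗮ.norm_comp_starProjection,
    ← (l.comp Vᗮ.starProjection).iSup_norm_le_one_norm_apply_eq_norm]
  simp only [Real.norm_eq_abs, ContinuousLinearMap.comp_apply]
end

section
/- Let H be a real Hilbert space, V ⊆ H a closed subspace with orthogonal projection Π_V, and let S_L and S_B be two families of continuous linear functionals on H with Riesz representers. Let N : H → ℝ be a function, and let C_L, C_B ≥ 0 and P̄ ≥ 0 be constants such that: (i) for every w ∈ H, N(w) ≤ C_L · sup_{λ ∈ S_L} |λ(w)| + C_B · sup_{λ ∈ S_B} |λ(w)| (a well-posedness estimate), and (ii) for every λ ∈ S_L ∪ S_B, the representer satisfies ‖v_λ − Π_V(v_λ)‖ ≤ P̄ (a uniform power function bound). Then for every u ∈ H, the generalized interpolation error e := u − Π_V(u) satisfies N(e) ≤ (C_L + C_B) · P̄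 · ‖u‖. -/
/-!
The error `e = u - Π_V u` is orthogonal to `V`, so every functional satisfies
`λ e = ⟪v_λ - Π_V v_λ, e⟫`; Cauchy–Schwarz together with `‖e‖ ≤ ‖u‖` bounds each `|λ e|`
by `P̄ ‖u‖`, and the well-posedness estimate adds up the two suprema.
-/

open scoped InnerProductSpace

namespace Submodule

variable {𝕜 H : Type*} [RCLike 𝕜] [NormedAddCommGroup H] [InnerProductSpace 𝕜 H]
  (V : Submodule 𝕜 H) [V.HasOrthogonalProjection]

theorem norm_sub_starProjection_le (u : H) : ‖u - V.starProjection u‖ ≤ ‖u‖ := by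
  rw [← starProjection_orthogonal_val]
  exact Vᗮ.norm_starProjection_apply_le u

variable [CompleteSpace H]

theorem apply_eq_inner_sub_starProjection_of_mem_orthogonal (l : StrongDual 𝕜 H) {e : H}
    (he : e ∈ Vᗮ) :
    l e = ⟪(InnerProductSpace.toDual 𝕜 H).symm l -
      V.starProjection ((InnerProductSpace.toDual 𝕜 H).symm l), e⟫_𝕜 := by
  rw [inner_sub_left, inner_right_of_mem_orthogonal (V.starProjection_apply_mem _) he, sub_zero,
    InnerProductSpace.toDual_symm_apply]

theorem norm_apply_sub_starProjection_le (l : StrongDual 𝕜 H) (u : H) :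
    ‖l (u - V.starProjection u)‖ ≤
      ‖(InnerProductSpace.toDual 𝕜 H).symm l -
        V.starProjection ((InnerProductSpace.toDual 𝕜 H).symm l)‖ * ‖u‖ := by
  rw [V.apply_eq_inner_sub_starProjection_of_mem_orthogonal l
    (V.sub_starProjection_mem_orthogonal u)]
  exact (norm_inner_le_norm _ _).trans (by gcongr; exact V.norm_sub_starProjection_le u)

end Submodule

theorem error_bound_from_wellposedness_and_power_bound_general
    {H : Type*} [NormedAddCommGroup H] [InnerProductSpace ℝ H] [CompleteSpace H]
    (V : Submodule ℝ H) [V.HasOrthogonalProjection]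
    (SL SB : Set (H →L[ℝ] ℝ))
    (N : H → ℝ) (CL CB Pbar : ℝ) (hCL : 0 ≤ CL) (hCB : 0 ≤ CB) (hP : 0 ≤ Pbar)
    (hwp : ∀ w : H,
      N w ≤ CL * (⨆ l : SL, |(l : H →L[ℝ] ℝ) w|) + CB * (⨆ l : SB, |(l : H →L[ℝ] ℝ) w|))
    (hpow : ∀ l ∈ SL ∪ SB,
      ‖(InnerProductSpace.toDual ℝ H).symm l -
          (V.orthogonalProjectionOnto ((InnerProductSpace.toDual ℝ H).symm l) : H)‖ ≤ Pbar)
    (u : H) :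
    N (u - (V.orthogonalProjectionOnto u : H)) ≤ (CL + CB) * Pbar * ‖u‖ := by
  simp only [Submodule.coe_orthogonalProjectionOnto_apply] at hpow ⊢
  set e := u - V.starProjection u
  have hbound : ∀ l ∈ SL ∪ SB, |l e| ≤ Pbar * ‖u‖ := fun l hl => by
    rw [← Real.norm_eq_abs]
    exact (V.norm_apply_sub_starProjection_le l u).trans (by gcongr; exact hpow l hl)
  have hsup : ∀ S ⊆ SL ∪ SB, (⨆ l : S, |(l : H →L[ℝ] ℝ) e|) ≤ Pbar * ‖u‖ := fun S hS =>
    Real.iSup_le (fun l => hbound l (hS l.2)) (by positivity)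
  calc N e ≤ CL * (⨆ l : SL, |(l : H →L[ℝ] ℝ) e|) + CB * (⨆ l : SB, |(l : H →L[ℝ] ℝ) e|) :=
        hwp e
    _ ≤ CL * (Pbar * ‖u‖) + CB * (Pbar * ‖u‖) := by
        gcongr
        · exact hsup SL Set.subset_union_left
        · exact hsup SB Set.subset_union_right
    _ = (CL + CB) * Pbar * ‖u‖ := by ring

/-- Abstract passage from a well-posedness estimate to an error bound for
the projection (symmetric collocation) approximant: if
`N w ≤ C_L · sup_{λ ∈ S_L} |λ w| + C_B · sup_{λ ∈ S_B} |λ w|` for all `w`, and the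
projection residuals of the Riesz representers of all functionals in `S_L ∪ S_B` are
bounded by `P̄`, then the interpolation error `e = u - Π_V u` satisfies
`N e ≤ (C_L + C_B) · P̄ · ‖u‖`. -/
theorem error_bound_from_wellposedness_and_power_bound
    {H : Type*} [NormedAddCommGroup H] [InnerProductSpace ℝ H] [CompleteSpace H]
    (V : Submodule ℝ H) [V.HasOrthogonalProjection]
    (SL SB : Set (H →L[ℝ] ℝ)) (hSL : SL.Nonempty) (hSB : SB.Nonempty)
    (N : H → ℝ) (CL CB Pbar : ℝ) (hCL : 0 ≤ CL) (hCB : 0 ≤ CB) (hP : 0 ≤ Pbar)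
    (hwp : ∀ w : H,
      N w ≤ CL * (⨆ l : SL, |(l : H →L[ℝ] ℝ) w|) + CB * (⨆ l : SB, |(l : H →L[ℝ] ℝ) w|))
    (hpow : ∀ l ∈ SL ∪ SB,
      ‖(InnerProductSpace.toDual ℝ H).symm l -
          (V.orthogonalProjectionOnto ((InnerProductSpace.toDual ℝ H).symm l) : H)‖ ≤ Pbar)
    (u : H) :
    N (u - (V.orthogonalProjectionOnto u : H)) ≤ (CL + CB) * Pbar * ‖u‖ :=
  error_bound_from_wellposedness_and_power_bound_general V SL SB N CL CB Pbar hCL hCB hP hwp hpow u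
end
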